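/- If n > 1 is a positive integer with δ(n) < 12·(2 − 3·log₃ 2) + 1 = 2.2865…, then n is stable, i.e., ‖3^k · n‖ = 3k + ‖n‖ for every integer k ≥ 1. -/

import Mathlib

open Real

/-- `Writes n k` means the positive integer `n` can be written using exactly `k` ones
combined by additions and multiplications. -/
inductive Writes : ℕ → ℕ → Prop
  | one : Writes 1 1
  | add {a b m n : ℕ} : Writes a m → Writes b n → Writes (a + b) (m + n)
  | mul {a b m n : ℕ} : Writes a m → Writes b n → Writes (a * b) (m + n)

/-- The integer complexity `‖n‖`: the least number of 1's needed to write `n`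
using additions and multiplications. -/
noncomputable def cpx (n : ℕ) : ℕ := sInf {k | Writes n k}

/-- The defect `δ(n) = ‖n‖ - 3 log₃ n`. -/
noncomputable def defect (n : ℕ) : ℝ := (cpx n : ℝ) - 3 * Real.logb 3 n

/-!
Write `δ(2) = 2 - 3 log₃ 2 > 0`. Every `m > 1` with `δ(m) < 12 δ(2)` is `s * 2 ^ α * 3 ^ β`
with `‖m‖ = V + 2 α + 3 β`, where `(s, V)` runs over a short list of bases prime to `3`. This
goes by strong induction on `m`, along the last operation of an optimal representation. If it is
a product, both factors again have defect `< 12 δ(2)` and their bases multiply: two bases other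
than `1` cost too much, except `5 * 5`. If it is a sum, the smaller summand costs at most `3`, so
`‖m‖ = ‖m - 1‖ + 1`, and adding `1` to `s * 2 ^ α * 3 ^ β` keeps the defect small only in the
few cases that produce the other bases.

If now `‖3 ^ k * n‖ < 3 k + ‖n‖`, then `δ(3 ^ k * n) ≤ δ(n) - 1 < 12 δ(2)`, so
`3 ^ k * n = s * 2 ^ α * 3 ^ β` with `k ≤ β`, and writing `n = s * 2 ^ α * 3 ^ (β - k)` costs at
most `‖3 ^ k * n‖ - 3 k < ‖n‖`.
-/

theorem succ_pow_three_le_three_pow_succ {b n : ℕ} (hn : 1 ≤ n) (hb : b ^ 3 ≤ 3 ^ n) :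
    (b + 1) ^ 3 ≤ 3 ^ (n + 1) := by
  rw [pow_succ 3 n]
  rcases Nat.lt_or_ge b 3 with hb3 | hb3
  · have h3 : 3 ≤ 3 ^ n := Nat.le_self_pow (by omega) 3
    interval_cases b
    · omega
    · omega
    · have hn2 : 2 ≤ n := by
        by_contra! h
        interval_cases n
        norm_num at hb
      have := Nat.pow_le_pow_right (show 0 < 3 by norm_num) hn2
      omega
  · have : (b + 1) ^ 3 ≤ 3 * b ^ 3 := by nlinarith [Nat.mul_le_mul hb3 hb3]
    omega

theorem add_pow_three_le_three_pow_add {a b m n : ℕ} (ha : a ^ 3 ≤ 3 ^ m) (hb : b ^ 3 ≤ 3 ^ n)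
    (hm : 2 ≤ m) (hn : 2 ≤ n) : (a + b) ^ 3 ≤ 3 ^ (m + n) := by
  have h9m : 3 ^ 2 ≤ 3 ^ m := Nat.pow_le_pow_right (by norm_num) hm
  have h9n : 3 ^ 2 ≤ 3 ^ n := Nat.pow_le_pow_right (by norm_num) hn
  have hcube : (a + b) ^ 3 ≤ 4 * (a ^ 3 + b ^ 3) := by
    zify
    nlinarith [mul_nonneg (by positivity : (0 : ℤ) ≤ a + b) (sq_nonneg ((a : ℤ) - b))]
  rw [pow_add]
  nlinarith

theorem le_one_of_pow_three_le_three {a : ℕ} (h : a ^ 3 ≤ 3 ^ 1) : a ≤ 1 := by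
  by_contra! ha
  have := Nat.pow_le_pow_left ha 3
  norm_num at this h
  omega

namespace Writes

theorem pos {n k : ℕ} (h : Writes n k) : 0 < n ∧ 0 < k := by
  induction h with
  | one => exact ⟨one_pos, one_pos⟩
  | add _ _ iha ihb => exact ⟨by omega, by omega⟩
  | mul _ _ iha ihb => exact ⟨Nat.mul_pos iha.1 ihb.1, by omega⟩

theorem self : ∀ {n : ℕ}, 0 < n → Writes n n
  | 1, _ => one
  | n + 2, _ => (self n.succ_pos).add one

theorem mul_pow {s V b c : ℕ} (h : Writes s V) (hb : Writes b c) :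
    ∀ e : ℕ, Writes (s * b ^ e) (V + c * e)
  | 0 => by simpa using h
  | e + 1 => by simpa [pow_succ, mul_add, ← mul_assoc, ← add_assoc] using (h.mul_pow hb e).mul hb

theorem two : Writes 2 2 := one.add one
theorem three : Writes 3 3 := two.add one
theorem four : Writes 4 4 := two.mul two

theorem mul_two_pow_mul_three_pow {s V : ℕ} (h : Writes s V) (α β : ℕ) :
    Writes (s * 2 ^ α * 3 ^ β) (V + 2 * α + 3 * β) :=
  (h.mul_pow two α).mul_pow three β

theorem pow_three_le {x k : ℕ} (h : Writes x k) : x ^ 3 ≤ 3 ^ k := by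
  induction h with
  | one => norm_num
  | @add a b m n ha hb iha ihb =>
    obtain ⟨ha0, hm0⟩ := ha.pos
    obtain ⟨hb0, hn0⟩ := hb.pos
    rcases Nat.lt_or_ge m 2 with hm | hm
    · obtain rfl : m = 1 := by omega
      obtain rfl : a = 1 := le_antisymm (le_one_of_pow_three_le_three iha) ha0
      rw [add_comm 1 b, add_comm 1 n]
      exact succ_pow_three_le_three_pow_succ hn0 ihb
    rcases Nat.lt_or_ge n 2 with hn | hn
    · obtain rfl : n = 1 := by omega
      obtain rfl : b = 1 := le_antisymm (le_one_of_pow_three_le_three ihb) hb0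
      exact succ_pow_three_le_three_pow_succ hm0 iha
    exact add_pow_three_le_three_pow_add iha ihb hm hn
  | mul _ _ iha ihb =>
    rw [_root_.mul_pow, pow_add]
    exact Nat.mul_le_mul iha ihb

end Writes

theorem writes_cpx {n : ℕ} (hn : 0 < n) : Writes n (cpx n) :=
  Nat.sInf_mem ⟨n, Writes.self hn⟩

theorem cpx_le {n k : ℕ} (h : Writes n k) : cpx n ≤ k := Nat.sInf_le h

theorem cpx_le_self {n : ℕ} (hn : 0 < n) : cpx n ≤ n := cpx_le (Writes.self hn)

theorem cpx_pos {n : ℕ} (hn : 0 < n) : 0 < cpx n := (writes_cpx hn).pos.2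

theorem cpx_add_le {a b : ℕ} (ha : 0 < a) (hb : 0 < b) : cpx (a + b) ≤ cpx a + cpx b :=
  cpx_le ((writes_cpx ha).add (writes_cpx hb))

theorem cpx_mul_le {a b : ℕ} (ha : 0 < a) (hb : 0 < b) : cpx (a * b) ≤ cpx a + cpx b :=
  cpx_le ((writes_cpx ha).mul (writes_cpx hb))

theorem pow_three_le_three_pow_cpx {n : ℕ} (hn : 0 < n) : n ^ 3 ≤ 3 ^ cpx n :=
  (writes_cpx hn).pow_three_le

theorem cpx_eq_self_of_le_three {b : ℕ} (hb0 : 0 < b) (hb : b ≤ 3) : cpx b = b := by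
  refine le_antisymm (cpx_le_self hb0) (not_lt.1 fun h => ?_)
  have hpos := cpx_pos hb0
  have := (pow_three_le_three_pow_cpx hb0).trans
    (Nat.pow_le_pow_right (by norm_num) (Nat.le_sub_one_of_lt h))
  interval_cases b
  · omega
  all_goals norm_num at this

theorem cpx_three_pow_mul_le (k : ℕ) {n : ℕ} (hn : 0 < n) : cpx (3 ^ k * n) ≤ 3 * k + cpx n := by
  simpa [mul_comm, add_comm] using cpx_le ((writes_cpx hn).mul_pow Writes.three k)

theorem cpx_add_le_cpx_add {a : ℕ} (ha : 0 < a) : ∀ c : ℕ, cpx (a + c) ≤ cpx a + c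
  | 0 => le_rfl
  | c + 1 => by
    have := cpx_le ((writes_cpx (show 0 < a + c by omega)).add Writes.one)
    have := cpx_add_le_cpx_add ha c
    rw [← add_assoc]
    omega

theorem le_three_of_cpx_le_three {b : ℕ} (hb : 0 < b) (h : cpx b ≤ 3) : b ≤ 3 := by
  by_contra! h4
  have := (Nat.pow_le_pow_left h4 3).trans
    ((pow_three_le_three_pow_cpx hb).trans (Nat.pow_le_pow_right (by norm_num) h))
  norm_num at this

theorem exists_cpx_split {m : ℕ} (hm : 1 < m) :
    (∃ a b, 0 < a ∧ 0 < b ∧ a + b = m ∧ cpx m = cpx a + cpx b) ∨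
      ∃ a b, 1 < a ∧ 1 < b ∧ a * b = m ∧ cpx m = cpx a + cpx b := by
  have hw := writes_cpx (show 0 < m by omega)
  generalize hc : cpx m = c at hw
  cases hw with
  | one => omega
  | @add a b k l ha hb =>
    have := cpx_add_le ha.pos.1 hb.pos.1
    have := cpx_le ha
    have := cpx_le hb
    exact Or.inl ⟨a, b, ha.pos.1, hb.pos.1, rfl, by omega⟩
  | @mul a b k l ha hb =>
    have := cpx_mul_le ha.pos.1 hb.pos.1
    have := cpx_le ha
    have := cpx_le hb
    have hab : cpx (a * b) = cpx a + cpx b := by omega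
    have ha1 : a ≠ 1 := by
      rintro rfl
      have := cpx_pos one_pos
      simp only [one_mul] at hab
      omega
    have hb1 : b ≠ 1 := by
      rintro rfl
      have := cpx_pos one_pos
      simp only [mul_one] at hab
      omega
    exact Or.inr ⟨a, b, by have := ha.pos.1; omega, by have := hb.pos.1; omega, rfl, by omega⟩

/-- `δ(m) < 12 δ(2) = 24 - 36 log₃ 2`, exponentiated. -/
def SmallDefect (m : ℕ) : Prop := 2 ^ 36 * 3 ^ cpx m < 3 ^ 24 * m ^ 3

theorem smallDefect_of_defect_lt {m : ℕ} (hm : 0 < m)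
    (h : defect m < 12 * (2 - 3 * logb 3 2)) : SmallDefect m := by
  have key : logb 3 ((2 : ℝ) ^ 36 * 3 ^ cpx m) < logb 3 ((3 : ℝ) ^ 24 * m ^ 3) := by
    rw [logb_mul (by positivity) (by positivity), logb_mul (by positivity) (by positivity),
      logb_pow, logb_pow, logb_pow, logb_pow, logb_self_eq_one (by norm_num)]
    unfold defect at h
    push_cast
    linarith
  exact_mod_cast (logb_lt_logb_iff (by norm_num) (by positivity) (by positivity)).1 key

namespace SmallDefect

theorem of_succ {a : ℕ} (h : SmallDefect (a + 1)) (ha : 3 ≤ a)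
    (hcpx : cpx (a + 1) = cpx a + 1) : SmallDefect a := by
  have hcube : (a + 1) ^ 3 ≤ 3 * a ^ 3 := by nlinarith [Nat.mul_le_mul ha ha]
  unfold SmallDefect at *
  rw [hcpx, pow_succ 3 (cpx a)] at h
  linarith [Nat.mul_le_mul_left (3 ^ 24) hcube]

theorem of_mul_left {a b : ℕ} (h : SmallDefect (a * b)) (hb : 0 < b)
    (hcpx : cpx (a * b) = cpx a + cpx b) : SmallDefect a := by
  have hb3 := Nat.mul_le_mul_left (3 ^ 24 * a ^ 3) (pow_three_le_three_pow_cpx hb)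
  unfold SmallDefect at *
  rw [hcpx, pow_add, mul_pow] at h
  exact Nat.lt_of_mul_lt_mul_right (a := 3 ^ cpx b) (by linarith)

theorem of_mul_right {a b : ℕ} (h : SmallDefect (a * b)) (ha : 0 < a)
    (hcpx : cpx (a * b) = cpx a + cpx b) : SmallDefect b := by
  rw [mul_comm] at h hcpx
  exact h.of_mul_left ha (by omega)

theorem cpx_le_three_of_add {a b : ℕ} (h : SmallDefect (a + b)) (ha : 0 < a) (hb : 0 < b)
    (hcpx : cpx (a + b) = cpx a + cpx b) (hba : cpx b ≤ cpx a) : cpx b ≤ 3 := by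
  have hsum : (a + b) ^ 3 ≤ 8 * 3 ^ cpx a := by
    have ha3 := pow_three_le_three_pow_cpx ha
    have hb3 := (pow_three_le_three_pow_cpx hb).trans (Nat.pow_le_pow_right (by norm_num) hba)
    rcases le_total a b with hab | hab
    · calc (a + b) ^ 3 ≤ (2 * b) ^ 3 := Nat.pow_le_pow_left (by omega) 3
        _ ≤ 8 * 3 ^ cpx a := by rw [mul_pow]; omega
    · calc (a + b) ^ 3 ≤ (2 * a) ^ 3 := Nat.pow_le_pow_left (by omega) 3
        _ ≤ 8 * 3 ^ cpx a := by rw [mul_pow]; omega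
  unfold SmallDefect at h
  rw [hcpx, pow_add] at h
  have hlt : 2 ^ 36 * 3 ^ cpx b < 8 * 3 ^ 24 :=
    Nat.lt_of_mul_lt_mul_right (a := 3 ^ cpx a) (by linarith [Nat.mul_le_mul_left (3 ^ 24) hsum])
  by_contra! h4
  have := Nat.pow_le_pow_right (show 0 < 3 by norm_num) h4
  omega

theorem cpx_eq_pred_add_one_or_mul {m : ℕ} (h : SmallDefect m) (hm : 1 < m) :
    cpx m = cpx (m - 1) + 1 ∨ ∃ a b, 1 < a ∧ 1 < b ∧ a * b = m ∧ cpx m = cpx a + cpx b := by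
  rcases exists_cpx_split hm with ⟨a, b, ha, hb, rfl, hab⟩ | hmul
  · left
    wlog hba : cpx b ≤ cpx a generalizing a b
    · rw [add_comm] at h hab ⊢
      exact this b a hb ha h (by omega) (by omega) (by omega)
    have hb3 := le_three_of_cpx_le_three hb (h.cpx_le_three_of_add ha hb hab hba)
    have hbb := cpx_eq_self_of_le_three hb hb3
    have h1 := cpx_add_le_cpx_add (show 0 < a + b - 1 by omega) 1
    have h2 := cpx_add_le_cpx_add ha (b - 1)
    rw [show a + b - 1 + 1 = a + b by omega] at h1
    rw [show a + (b - 1) = a + b - 1 by omega] at h2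
    omega
  · exact Or.inr hmul

end SmallDefect

theorem two_pow_cube_le_three_pow_sq (α : ℕ) : (2 ^ α) ^ 3 ≤ (3 ^ α) ^ 2 := by
  rw [← pow_mul, ← pow_mul, mul_comm α 3, mul_comm α 2, pow_mul, pow_mul]
  exact Nat.pow_le_pow_left (by norm_num) α

theorem mul_pow_three_le_of_le {R Q c d v K₀ K : ℕ} (hK : K₀ ≤ K)
    (h₀ : R * (c * 3 ^ K₀ + d) ^ 3 ≤ Q * 3 ^ (3 * K₀ + v)) :
    R * (c * 3 ^ K + d) ^ 3 ≤ Q * 3 ^ (3 * K + v) := by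
  have hlin : (c * 3 ^ K + d) * 3 ^ K₀ ≤ (c * 3 ^ K₀ + d) * 3 ^ K := by
    have := Nat.mul_le_mul_left d (Nat.pow_le_pow_right (show 0 < 3 by norm_num) hK)
    nlinarith
  refine Nat.le_of_mul_le_mul_left (c := 3 ^ (3 * K₀)) ?_ (by positivity)
  calc 3 ^ (3 * K₀) * (R * (c * 3 ^ K + d) ^ 3) = R * ((c * 3 ^ K + d) * 3 ^ K₀) ^ 3 := by ring
    _ ≤ R * ((c * 3 ^ K₀ + d) * 3 ^ K) ^ 3 := by gcongr
    _ = R * (c * 3 ^ K₀ + d) ^ 3 * 3 ^ (3 * K) := by ring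
    _ ≤ Q * 3 ^ (3 * K₀ + v) * 3 ^ (3 * K) := by gcongr
    _ = 3 ^ (3 * K₀) * (Q * 3 ^ (3 * K + v)) := by ring

/-- `V` is the cost of a representation of `s`, with `V = 0` for `s = 1`. -/
inductive IsBase : ℕ → ℕ → Prop
  | one : IsBase 1 0
  | five : IsBase 5 5
  | seventeen : IsBase 17 9
  | twentyFive : IsBase 25 10
  | seventyThree : IsBase 73 13
  | threePowAddOne {K : ℕ} (hK : 2 ≤ K) : IsBase (3 ^ K + 1) (3 * K + 1)
  | twoMulThreePowAddOne {K : ℕ} (hK : 1 ≤ K) : IsBase (2 * 3 ^ K + 1) (3 * K + 3)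
  | fourMulThreePowAddOne {K : ℕ} (hK : 1 ≤ K) : IsBase (4 * 3 ^ K + 1) (3 * K + 5)

def HasBaseForm (m : ℕ) : Prop :=
  ∃ s V α β : ℕ, IsBase s V ∧ m = s * 2 ^ α * 3 ^ β ∧ cpx m = V + 2 * α + 3 * β

namespace IsBase

variable {s V : ℕ}

theorem not_three_dvd (h : IsBase s V) : ¬ 3 ∣ s := by
  cases h with
  | threePowAddOne hK | twoMulThreePowAddOne hK | fourMulThreePowAddOne hK =>
    obtain ⟨j, rfl⟩ := Nat.exists_eq_add_of_le' hK
    rw [pow_succ]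
    omega
  | _ => norm_num

theorem not_three_dvd_mul_two_pow (h : IsBase s V) (α : ℕ) : ¬ 3 ∣ s * 2 ^ α := by
  rw [Nat.Prime.dvd_mul Nat.prime_three, not_or]
  exact ⟨h.not_three_dvd, fun h2 => by have := Nat.Prime.dvd_of_dvd_pow Nat.prime_three h2; omega⟩

theorem eq_one_or_writes (h : IsBase s V) : (s = 1 ∧ V = 0) ∨ Writes s V := by
  cases h with
  | one => exact Or.inl ⟨rfl, rfl⟩
  | five => exact Or.inr (Writes.four.add .one)
  | seventeen => exact Or.inr ((Writes.four.mul .four).add .one)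
  | twentyFive => exact Or.inr ((Writes.four.add .one).mul (Writes.four.add .one))
  | seventyThree => exact Or.inr (((Writes.two.mul .four).mul (Writes.three.mul .three)).add .one)
  | @threePowAddOne K hK =>
    obtain ⟨j, rfl⟩ := Nat.exists_eq_add_of_le' (show 1 ≤ K by omega)
    refine Or.inr ?_
    convert (Writes.three.mul_pow .three j).add .one using 1 <;> ring
  | @twoMulThreePowAddOne K hK =>
    refine Or.inr ?_
    convert (Writes.two.mul_pow .three K).add .one using 1; ring
  | @fourMulThreePowAddOne K hK =>
    refine Or.inr ?_
    convert (Writes.four.mul_pow .three K).add .one using 1; ring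

theorem hasBaseForm {m : ℕ} (h : IsBase s V) (hm : m = s) (hcpx : cpx m = V) :
    HasBaseForm m :=
  ⟨s, V, 0, 0, h, by simp [hm], by simp [hcpx]⟩

theorem cpx_le (h : IsBase s V) {α β : ℕ} (hm : 1 < s * 2 ^ α * 3 ^ β) :
    cpx (s * 2 ^ α * 3 ^ β) ≤ V + 2 * α + 3 * β := by
  rcases h.eq_one_or_writes with ⟨rfl, rfl⟩ | hw
  · rcases α with _ | α
    · rcases β with _ | β
      · simp at hm
      · calc cpx (1 * 2 ^ 0 * 3 ^ (β + 1)) = cpx (3 * 2 ^ 0 * 3 ^ β) := congrArg cpx (by ring)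
          _ ≤ 3 + 2 * 0 + 3 * β := _root_.cpx_le (Writes.three.mul_two_pow_mul_three_pow 0 β)
          _ = 0 + 2 * 0 + 3 * (β + 1) := by ring
    · calc cpx (1 * 2 ^ (α + 1) * 3 ^ β) = cpx (2 * 2 ^ α * 3 ^ β) := congrArg cpx (by ring)
        _ ≤ 2 + 2 * α + 3 * β := _root_.cpx_le (Writes.two.mul_two_pow_mul_three_pow α β)
        _ = 0 + 2 * (α + 1) + 3 * β := by ring
  · exact _root_.cpx_le (hw.mul_two_pow_mul_three_pow α β)

/-- With `750141 = 3 ^ 7 * 7 ^ 3`, the last alternative says `V - 3 log₃ s ≥ δ(7)` and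
`V + 1 - 3 log₃ (s + 1) ≥ 12 δ(2)`. -/
theorem trichotomy (h : IsBase s V) :
    (s = 1 ∧ V = 0) ∨ (s = 5 ∧ V = 5) ∨
      (3 ^ 13 * s ^ 3 ≤ 750141 * 3 ^ V ∧ 3 ^ 24 * (s + 1) ^ 3 ≤ 2 ^ 36 * 3 ^ (V + 1)) := by
  cases h with
  | one => exact Or.inl ⟨rfl, rfl⟩
  | five => exact Or.inr (Or.inl ⟨rfl, rfl⟩)
  | seventeen | twentyFive | seventyThree => exact Or.inr (Or.inr ⟨by norm_num, by norm_num⟩)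
  | threePowAddOne hK =>
    refine Or.inr (Or.inr ⟨?_, ?_⟩)
    · simpa using mul_pow_three_le_of_le (c := 1) (d := 1) (v := 1) hK (by norm_num)
    · simpa [add_assoc] using mul_pow_three_le_of_le (c := 1) (d := 2) (v := 2) hK (by norm_num)
  | twoMulThreePowAddOne hK =>
    refine Or.inr (Or.inr ⟨?_, ?_⟩)
    · exact mul_pow_three_le_of_le (d := 1) hK (by norm_num)
    · simpa [add_assoc] using mul_pow_three_le_of_le (c := 2) (d := 2) (v := 4) hK (by norm_num)
  | fourMulThreePowAddOne hK =>
    refine Or.inr (Or.inr ⟨?_, ?_⟩)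
    · exact mul_pow_three_le_of_le (d := 1) hK (by norm_num)
    · simpa [add_assoc] using mul_pow_three_le_of_le (c := 4) (d := 2) (v := 6) hK (by norm_num)

end IsBase

theorem not_smallDefect_succ {m s V α β : ℕ} (hm : m = s * 2 ^ α * 3 ^ β)
    (hsV : 3 ^ 24 * (s + 1) ^ 3 ≤ 2 ^ 36 * 3 ^ (V + 1))
    (hcpx : cpx (m + 1) = V + 2 * α + 3 * β + 1) : ¬ SmallDefect (m + 1) := by
  unfold SmallDefect
  rw [hcpx, not_lt]
  have hx : 1 ≤ 2 ^ α * 3 ^ β := Nat.one_le_iff_ne_zero.2 (by positivity)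
  have hm1 : m + 1 ≤ (s + 1) * (2 ^ α * 3 ^ β) := by rw [hm]; nlinarith
  calc 3 ^ 24 * (m + 1) ^ 3 ≤ 3 ^ 24 * ((s + 1) * (2 ^ α * 3 ^ β)) ^ 3 := by gcongr
    _ = 3 ^ 24 * (s + 1) ^ 3 * (2 ^ α) ^ 3 * (3 ^ β) ^ 3 := by ring
    _ ≤ 2 ^ 36 * 3 ^ (V + 1) * (3 ^ α) ^ 2 * (3 ^ β) ^ 3 :=
      Nat.mul_le_mul_right _ (Nat.mul_le_mul hsV (two_pow_cube_le_three_pow_sq α))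
    _ = 2 ^ 36 * 3 ^ (V + 2 * α + 3 * β + 1) := by ring

/-- The hypotheses say `V - 3 log₃ s ≥ 13 - log₃ R` and `W - 3 log₃ t ≥ 13 - log₃ Q`, which add up
to at least `12 δ(2)`. -/
theorem not_smallDefect_of_mul {s t V W R Q α β : ℕ} (hs : 3 ^ 13 * s ^ 3 ≤ R * 3 ^ V)
    (ht : 3 ^ 13 * t ^ 3 ≤ Q * 3 ^ W) (hRQ : R * Q ≤ 9 * 2 ^ 36)
    (hcpx : cpx (s * t * 2 ^ α * 3 ^ β) = V + W + 2 * α + 3 * β) :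
    ¬ SmallDefect (s * t * 2 ^ α * 3 ^ β) := by
  unfold SmallDefect
  rw [hcpx, not_lt]
  refine Nat.le_of_mul_le_mul_left (c := 3 ^ 26) ?_ (by positivity)
  calc 3 ^ 26 * (3 ^ 24 * (s * t * 2 ^ α * 3 ^ β) ^ 3)
        = 3 ^ 24 * ((3 ^ 13 * s ^ 3) * (3 ^ 13 * t ^ 3)) * ((2 ^ α) ^ 3 * (3 ^ β) ^ 3) := by ring
    _ ≤ 3 ^ 24 * ((R * 3 ^ V) * (Q * 3 ^ W)) * ((3 ^ α) ^ 2 * (3 ^ β) ^ 3) :=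
      Nat.mul_le_mul (Nat.mul_le_mul_left _ (Nat.mul_le_mul hs ht))
        (Nat.mul_le_mul_right _ (two_pow_cube_le_three_pow_sq α))
    _ = 3 ^ 24 * (R * Q) * (3 ^ V * 3 ^ W * (3 ^ α) ^ 2 * (3 ^ β) ^ 3) := by ring
    _ ≤ 3 ^ 24 * (9 * 2 ^ 36) * (3 ^ V * 3 ^ W * (3 ^ α) ^ 2 * (3 ^ β) ^ 3) := by gcongr
    _ = 3 ^ 26 * (2 ^ 36 * 3 ^ (V + W + 2 * α + 3 * β)) := by ring

theorem HasBaseForm.mul {a b : ℕ} (ha : HasBaseForm a) (hb : HasBaseForm b)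
    (hab : cpx (a * b) = cpx a + cpx b) (h : SmallDefect (a * b)) : HasBaseForm (a * b) := by
  obtain ⟨s, V, α, β, hs, rfl, hcpxa⟩ := ha
  obtain ⟨t, W, γ, ε, ht, rfl, hcpxb⟩ := hb
  have hprod : s * 2 ^ α * 3 ^ β * (t * 2 ^ γ * 3 ^ ε) = s * t * 2 ^ (α + γ) * 3 ^ (β + ε) := by
    ring
  have hcpx : cpx (s * t * 2 ^ (α + γ) * 3 ^ (β + ε)) = V + W + 2 * (α + γ) + 3 * (β + ε) := by
    rw [← hprod, hab, hcpxa, hcpxb]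
    ring
  rw [hprod] at h ⊢
  have h5 : 3 ^ 13 * 5 ^ 3 ≤ 820125 * 3 ^ 5 := by norm_num
  rcases hs.trichotomy with ⟨rfl, rfl⟩ | ⟨rfl, rfl⟩ | ⟨hsR, -⟩
  · exact ⟨t, W, α + γ, β + ε, ht, by ring, by rw [hcpx]; ring⟩
  · rcases ht.trichotomy with ⟨rfl, rfl⟩ | ⟨rfl, rfl⟩ | ⟨htR, -⟩
    · exact ⟨5, 5, α + γ, β + ε, .five, by ring, by rw [hcpx]⟩
    · exact ⟨25, 10, α + γ, β + ε, .twentyFive, rfl, by rw [hcpx]⟩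
    · exact absurd h (not_smallDefect_of_mul h5 htR (by norm_num) hcpx)
  · rcases ht.trichotomy with ⟨rfl, rfl⟩ | ⟨rfl, rfl⟩ | ⟨htR, -⟩
    · exact ⟨s, V, α + γ, β + ε, hs, by ring, by rw [hcpx]; ring⟩
    · exact absurd h (not_smallDefect_of_mul hsR h5 (by norm_num) hcpx)
    · exact absurd h (not_smallDefect_of_mul hsR htR (by norm_num) hcpx)

theorem hasBaseForm_two_pow_mul_three_pow_add_one {α β : ℕ} (h3 : 3 ≤ 2 ^ α * 3 ^ β)
    (hcpx : cpx (2 ^ α * 3 ^ β + 1) = 2 * α + 3 * β + 1) (h : SmallDefect (2 ^ α * 3 ^ β + 1)) :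
    HasBaseForm (2 ^ α * 3 ^ β + 1) := by
  rcases α with _ | _ | _ | _ | _ | α
  · rcases β with _ | _ | β
    · norm_num at h3
    · exact ⟨1, 0, 2, 0, .one, rfl, hcpx⟩
    · exact (IsBase.threePowAddOne (K := β + 2) (by omega)).hasBaseForm (by ring)
        (by rw [hcpx]; ring)
  · rcases β with _ | β
    · norm_num at h3
    · exact (IsBase.twoMulThreePowAddOne (K := β + 1) (by omega)).hasBaseForm (by ring)
        (by rw [hcpx]; ring)
  · rcases β with _ | β
    · exact IsBase.five.hasBaseForm rfl hcpx
    · exact (IsBase.fourMulThreePowAddOne (K := β + 1) (by omega)).hasBaseForm (by ring)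
        (by rw [hcpx]; ring)
  · rcases β with _ | _ | _ | β
    · have := cpx_le (Writes.three.mul .three)
      norm_num at hcpx this
      omega
    · exact IsBase.twentyFive.hasBaseForm rfl hcpx
    · exact IsBase.seventyThree.hasBaseForm rfl hcpx
    · exact absurd h (not_smallDefect_succ (s := 216) (V := 15) (α := 0) (β := β) (by ring)
        (by norm_num) (by rw [hcpx]; ring))
  · rcases β with _ | β
    · exact IsBase.seventeen.hasBaseForm rfl hcpx
    · exact absurd h (not_smallDefect_succ (s := 48) (V := 11) (α := 0) (β := β) (by ring)
        (by norm_num) (by rw [hcpx]; ring))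
  · exact absurd h (not_smallDefect_succ (s := 32) (V := 10) (α := α) (β := β) (by ring)
      (by norm_num) (by rw [hcpx]; ring))

theorem not_smallDefect_five_mul_add_one {α β : ℕ}
    (hcpx : cpx (5 * 2 ^ α * 3 ^ β + 1) = 5 + 2 * α + 3 * β + 1) :
    ¬ SmallDefect (5 * 2 ^ α * 3 ^ β + 1) := by
  rcases α with _ | α
  · rcases β with _ | β
    · have := cpx_le (Writes.two.mul .three)
      norm_num at hcpx this
      omega
    · exact not_smallDefect_succ (s := 15) (V := 8) (α := 0) (β := β) (by ring)
        (by norm_num) (by rw [hcpx]; ring)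
  · exact not_smallDefect_succ (s := 10) (V := 7) (α := α) (β := β) (by ring)
      (by norm_num) (by rw [hcpx]; ring)

theorem HasBaseForm.succ {a : ℕ} (ha : HasBaseForm a) (h3 : 3 ≤ a)
    (hcpx : cpx (a + 1) = cpx a + 1) (h : SmallDefect (a + 1)) : HasBaseForm (a + 1) := by
  obtain ⟨s, V, α, β, hs, rfl, hcpxa⟩ := ha
  rw [hcpxa] at hcpx
  rcases hs.trichotomy with ⟨rfl, rfl⟩ | ⟨rfl, rfl⟩ | ⟨-, hsucc⟩
  · simp only [one_mul, zero_add] at h3 hcpx h ⊢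
    exact hasBaseForm_two_pow_mul_three_pow_add_one h3 hcpx h
  · exact absurd h (not_smallDefect_five_mul_add_one hcpx)
  · exact absurd h (not_smallDefect_succ rfl hsucc hcpx)

theorem hasBaseForm_of_smallDefect {m : ℕ} (hm : 1 < m) (h : SmallDefect m) : HasBaseForm m := by
  induction m using Nat.strong_induction_on with
  | _ m ih =>
  rcases h.cpx_eq_pred_add_one_or_mul hm with hpred | ⟨a, b, ha, hb, rfl, hab⟩
  · obtain ⟨a, rfl⟩ : ∃ a, m = a + 1 := ⟨m - 1, by omega⟩
    rw [Nat.add_sub_cancel] at hpred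
    rcases (by omega : a = 1 ∨ a = 2 ∨ 3 ≤ a) with rfl | rfl | ha
    · exact ⟨1, 0, 1, 0, .one, rfl, cpx_eq_self_of_le_three (by norm_num) (by norm_num)⟩
    · exact ⟨1, 0, 0, 1, .one, rfl, cpx_eq_self_of_le_three (by norm_num) (by norm_num)⟩
    · exact (ih a (by omega) (by omega) (h.of_succ ha hpred)).succ ha hpred h
  · have hlt : a < a * b ∧ b < a * b := ⟨by nlinarith, by nlinarith⟩
    exact (ih a hlt.1 ha (h.of_mul_left (by omega) hab)).mul
      (ih b hlt.2 hb (h.of_mul_right (by omega) hab)) hab h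

theorem le_and_eq_of_three_pow_mul_eq {k n t β : ℕ} (ht : ¬ 3 ∣ t)
    (h : 3 ^ k * n = t * 3 ^ β) : k ≤ β ∧ n = t * 3 ^ (β - k) := by
  have hcop : Nat.Coprime (3 ^ k) t :=
    Nat.Coprime.pow_left k ((Nat.Prime.coprime_iff_not_dvd Nat.prime_three).2 ht)
  have hkβ : k ≤ β := (Nat.pow_dvd_pow_iff_le_right (by norm_num)).1
    (hcop.dvd_of_dvd_mul_left (Dvd.intro n h))
  obtain ⟨j, rfl⟩ := Nat.exists_eq_add_of_le hkβ
  refine ⟨hkβ, Nat.eq_of_mul_eq_mul_left (pow_pos three_pos k) ?_⟩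
  rw [h, Nat.add_sub_cancel_left]
  ring

theorem defect_three_pow_mul (k : ℕ) {n : ℕ} (hn : 0 < n) :
    defect (3 ^ k * n) = defect n + ((cpx (3 ^ k * n) : ℝ) - (3 * k + cpx n)) := by
  unfold defect
  push_cast
  rw [logb_mul (by positivity) (by positivity), logb_pow, logb_self_eq_one (by norm_num)]
  ring

/-- If n > 1 and δ(n) < 12·(2 − 3·log₃ 2) + 1 then n is stable. -/
theorem stable_of_small_defect (n : ℕ) (hn : 1 < n)
    (hd : defect n < 12 * (2 - 3 * Real.logb 3 2) + 1) :
    ∀ k : ℕ, 1 ≤ k → cpx (3 ^ k * n) = 3 * k + cpx n := by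
  intro k _
  refine le_antisymm (cpx_three_pow_mul_le k (by omega)) (not_lt.1 fun hlt => ?_)
  have hsmall : SmallDefect (3 ^ k * n) := by
    refine smallDefect_of_defect_lt (by positivity) ?_
    have : (cpx (3 ^ k * n) : ℝ) + 1 ≤ 3 * k + cpx n := by exact_mod_cast hlt
    rw [defect_three_pow_mul k (by omega)]
    linarith
  obtain ⟨s, V, α, β, hs, hform, hcpx⟩ :=
    hasBaseForm_of_smallDefect (hn.trans_le (Nat.le_mul_of_pos_left n (by positivity))) hsmall
  obtain ⟨hkβ, rfl⟩ := le_and_eq_of_three_pow_mul_eq (hs.not_three_dvd_mul_two_pow α) hform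
  have := hs.cpx_le (α := α) (β := β - k) hn
  omega
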